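/- arXiv:1402.1572 — 3 statements merged into one kernel-verified Lean document; each statement's English description precedes it below -/
import Mathlib

section
/- Let S ≥ 1 and define SNR = S, INR = S^α, C = S^β with α, β ≥ 0. Then lim_{S→∞} [log(1 + INR + (SNR + C + INR·C + 2√(SNR·INR))/(1 + INR))] / log(1 + S) = max{α, β, 1 − α} for α ≤ 1, β ≤ 1. -/
/-!
Write `a = S^α ≥ 1`, `b = S^β`. The argument of the logarithm is
`T = 1 + a + (S + b + a b + 2√(S a)) / (1 + a)`, and since `1 + a ≤ 2a` each of `a`, `b` and
`S / a = S^(1-α)` is at most `2T`, while every summand of `T` is at most a constant times the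
largest of them. Hence `T` lies within a constant factor of `S^max(α, β, 1-α)`, so
`log T = max(α, β, 1-α) · log S + O(1)`, and `log S = log (1 + S) + O(1)`.
-/

open Real Filter

/-- `thirdTerm SNR INR C`, the argument of the logarithm in the third term of the bound. -/
noncomputable def thirdTerm (s a b : ℝ) : ℝ :=
  1 + a + (s + b + a * b + 2 * √(s * a)) / (1 + a)

section thirdTerm

variable {s a b : ℝ}

theorem max_le_two_mul_thirdTerm (hs : 0 ≤ s) (ha : 1 ≤ a) (hb : 0 ≤ b) :
    max a (max b (s / a)) ≤ 2 * thirdTerm s a b := by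
  have ha0 : 0 < a := by linarith
  have hsqrt : 0 ≤ √(s * a) := sqrt_nonneg _
  have hden : s + a * b ≤ 2 * a * ((s + b + a * b + 2 * √(s * a)) / (1 + a)) := by
    calc s + a * b ≤ s + b + a * b + 2 * √(s * a) := by nlinarith
      _ = (1 + a) * ((s + b + a * b + 2 * √(s * a)) / (1 + a)) := by field_simp
      _ ≤ 2 * a * ((s + b + a * b + 2 * √(s * a)) / (1 + a)) := by
        gcongr
        linarith
  have hb' : b ≤ 2 * ((s + b + a * b + 2 * √(s * a)) / (1 + a)) := by
    nlinarith
  have hsa : s / a ≤ 2 * ((s + b + a * b + 2 * √(s * a)) / (1 + a)) := by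
    rw [div_le_iff₀ ha0]
    nlinarith
  have hfrac : 0 ≤ (s + b + a * b + 2 * √(s * a)) / (1 + a) := by positivity
  unfold thirdTerm
  exact max_le (by linarith) (max_le (by linarith) (by linarith))

theorem thirdTerm_le_seven_mul_max (hs : 0 ≤ s) (ha : 1 ≤ a) (hb : 0 ≤ b) :
    thirdTerm s a b ≤ 7 * max a (max b (s / a)) := by
  set M := max a (max b (s / a))
  have ha0 : 0 < a := by linarith
  have haM : a ≤ M := le_max_left _ _
  have hbM : b ≤ M := (le_max_left _ _).trans (le_max_right _ _)
  have hsM : s ≤ M * a := (div_le_iff₀ ha0).mp ((le_max_right _ _).trans (le_max_right _ _))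
  have hMa : 0 ≤ M * a := by positivity
  -- both `s` and `a ≤ M ≤ M a` are at most `M a`
  have hsqrt : √(s * a) ≤ M * a := by
    calc √(s * a) ≤ √((M * a) * (M * a)) := by
          gcongr
          nlinarith
      _ = M * a := sqrt_mul_self hMa
  have hnum : s + b + a * b + 2 * √(s * a) ≤ 5 * (M * a) := by nlinarith
  have hfrac : (s + b + a * b + 2 * √(s * a)) / (1 + a) ≤ 5 * M := by
    calc (s + b + a * b + 2 * √(s * a)) / (1 + a)
        ≤ (s + b + a * b + 2 * √(s * a)) / a := by gcongr; linarith
      _ ≤ 5 * M := by rw [div_le_iff₀ ha0]; linarith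
  unfold thirdTerm
  linarith

end thirdTerm

theorem rpow_max_max_one_sub {S : ℝ} (hS : 1 ≤ S) (α β : ℝ) :
    S ^ max α (max β (1 - α)) = max (S ^ α) (max (S ^ β) (S / S ^ α)) := by
  have hmono := monotone_rpow_of_base_ge_one hS
  rw [hmono.map_max, hmono.map_max, rpow_sub (by linarith), rpow_one]

theorem abs_log_sub_mul_log_le {x y c m : ℝ} (hx : 0 < x) (hc : 0 < c)
    (hlo : x ^ m / c ≤ y) (hhi : y ≤ c * x ^ m) : |log y - m * log x| ≤ log c := by
  have hxm : 0 < x ^ m := rpow_pos_of_pos hx m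
  have hlo' := log_le_log (div_pos hxm hc) hlo
  have hhi' := log_le_log ((div_pos hxm hc).trans_le hlo) hhi
  rw [log_div hxm.ne' hc.ne', log_rpow hx] at hlo'
  rw [log_mul hc.ne' hxm.ne', log_rpow hx] at hhi'
  exact abs_le.mpr ⟨by linarith, by linarith⟩

theorem abs_log_sub_log_one_add_le {x : ℝ} (hx : 1 ≤ x) : |log x - log (1 + x)| ≤ log 2 := by
  have hx0 : 0 < x := by linarith
  have hle : log x ≤ log (1 + x) := log_le_log hx0 (by linarith)
  have hge : log (1 + x) ≤ log 2 + log x := by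
    rw [← log_mul two_ne_zero hx0.ne']
    exact log_le_log (by linarith) (by linarith)
  rw [abs_sub_comm, abs_of_nonneg (by linarith)]
  linarith

theorem tendsto_div_of_abs_sub_mul_le {ι : Type*} {l : Filter ι} {f L : ι → ℝ} {m K : ℝ}
    (hL : Tendsto L l atTop) (hf : ∀ᶠ i in l, |f i - m * L i| ≤ K) :
    Tendsto (fun i => f i / L i) l (nhds m) := by
  have hdev : Tendsto (fun i => (f i - m * L i) / L i) l (nhds 0) := by
    refine squeeze_zero_norm' ?_ (by simpa using hL.inv_tendsto_atTop.const_mul K)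
    filter_upwards [hf, hL.eventually_gt_atTop 0] with i hfi hLi
    rw [norm_div, norm_of_nonneg hLi.le, div_eq_mul_inv]
    gcongr
    exact hfi
  refine (by simpa using hdev.const_add m : Tendsto _ l (nhds m)).congr' ?_
  filter_upwards [hL.eventually_gt_atTop 0] with i hLi
  field_simp
  ring

theorem tendsto_log_div_log_one_add_of_rpow_bounds {f : ℝ → ℝ} {m c : ℝ} (hc : 0 < c)
    (hf : ∀ᶠ S in atTop, S ^ m / c ≤ f S ∧ f S ≤ c * S ^ m) :
    Tendsto (fun S => log (f S) / log (1 + S)) atTop (nhds m) := by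
  refine tendsto_div_of_abs_sub_mul_le (K := log c + |m| * log 2)
    (tendsto_log_atTop.comp (tendsto_atTop_add_const_left _ 1 tendsto_id)) ?_
  filter_upwards [hf, eventually_ge_atTop 1] with S ⟨hlo, hhi⟩ hS
  calc |log (f S) - m * log (1 + S)|
      = |(log (f S) - m * log S) + m * (log S - log (1 + S))| := by ring_nf
    _ ≤ |log (f S) - m * log S| + |m| * |log S - log (1 + S)| := by
        rw [← abs_mul]; exact abs_add_le _ _
    _ ≤ log c + |m| * log 2 := by
        gcongr
        · exact abs_log_sub_mul_log_le (by linarith) hc hlo hhi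
        · exact abs_log_sub_log_one_add_le hS

theorem gdof_third_term_r1_two_r2_general (α β : ℝ) (hα0 : 0 ≤ α) :
    Tendsto (fun S : ℝ =>
        Real.logb 2 (1 + S ^ α +
          (S + S ^ β + S ^ α * S ^ β + 2 * Real.sqrt (S * S ^ α)) / (1 + S ^ α))
          / Real.logb 2 (1 + S))
      atTop (nhds (max α (max β (1 - α)))) := by
  have hbounds : ∀ᶠ S in atTop,
      S ^ max α (max β (1 - α)) / 7 ≤ thirdTerm S (S ^ α) (S ^ β) ∧
        thirdTerm S (S ^ α) (S ^ β) ≤ 7 * S ^ max α (max β (1 - α)) := by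
    filter_upwards [eventually_ge_atTop 1] with S hS
    have hS0 : 0 < S := by linarith
    have ha : 1 ≤ S ^ α := one_le_rpow hS hα0
    have hb : 0 ≤ S ^ β := (rpow_pos_of_pos hS0 β).le
    rw [rpow_max_max_one_sub hS]
    have hlo := max_le_two_mul_thirdTerm hS0.le ha hb
    have hM : 0 ≤ max (S ^ α) (max (S ^ β) (S / S ^ α)) := by positivity
    exact ⟨by linarith, thirdTerm_le_seven_mul_max hS0.le ha hb⟩
  have hlog := tendsto_log_div_log_one_add_of_rpow_bounds (by norm_num) hbounds
  refine hlog.congr fun S => ?_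
  simp only [thirdTerm, ← log_div_log, div_div_div_cancel_right₀ (log_pos one_lt_two).ne']

/-- gDoF prelog of the third term of the Gaussian `R₁ + 2R₂` outer bound:
with `SNR = S`, `INR = S^α`, `C = S^β` and `0 ≤ α ≤ 1`, `0 ≤ β ≤ 1`,
`lim_{S→∞} log(1 + INR + (SNR + C + INR·C + 2√(SNR·INR))/(1 + INR)) / log(1 + S)
  = max{α, β, 1−α}`. -/
theorem gdof_third_term_r1_two_r2 (α β : ℝ) (hα0 : 0 ≤ α) (hα1 : α ≤ 1)
    (hβ0 : 0 ≤ β) (hβ1 : β ≤ 1) :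
    Tendsto (fun S : ℝ =>
        Real.logb 2 (1 + S ^ α +
          (S + S ^ β + S ^ α * S ^ β + 2 * Real.sqrt (S * S ^ α)) / (1 + S ^ α))
          / Real.logb 2 (1 + S))
      atTop (nhds (max α (max β (1 - α)))) :=
  gdof_third_term_r1_two_r2_general α β hα0
end

section
/- Let S ≥ 1, α, β ∈ [0,1]. Then lim_{S→∞} [log(1 + (√S + √(S^α))²) + log(1 + S^β) + log 2 + log(1 + S/(1 + S^α + S^β)) + log(1 + S^α/S^β + S/S^α)] / log(1+S) = 1 + [1 − max{α,β}]⁺ + max{α, 1 − α + β}. -/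
/-!
Each of the five logarithms is the logarithm of a function squeezed between two constant multiples
of a power `S ^ e`, so its ratio to `log (1 + S)` tends to `e`; the constants only contribute
`O(1) / log S`. The exponents are `1`, `β`, `0`, `1 - max α β` and `max (α - β) (1 - α)`, and
their sum is the claimed prelog.
-/

open Real Filter Topology

lemma tendsto_log_const_mul_rpow_div_log {c : ℝ} (hc : 0 < c) (e : ℝ) :
    Tendsto (fun S => log (c * S ^ e) / log S) atTop (𝓝 e) := by
  have h : Tendsto (fun S => log c / log S + e) atTop (𝓝 (0 + e)) :=
    (tendsto_const_nhds.div_atTop tendsto_log_atTop).add tendsto_const_nhds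
  rw [zero_add] at h
  refine h.congr' ?_
  filter_upwards [eventually_gt_atTop 1] with S hS
  have hlog : log S ≠ 0 := (log_pos hS).ne'
  rw [log_mul hc.ne' (by positivity), log_rpow (by linarith)]
  field_simp

lemma tendsto_log_div_log_of_bounds {f : ℝ → ℝ} {e c₁ c₂ : ℝ} (hc₁ : 0 < c₁) (hc₂ : 0 < c₂)
    (hf : ∀ᶠ S in atTop, c₁ * S ^ e ≤ f S ∧ f S ≤ c₂ * S ^ e) :
    Tendsto (fun S => log (f S) / log S) atTop (𝓝 e) := by
  refine tendsto_of_tendsto_of_tendsto_of_le_of_le'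
    (tendsto_log_const_mul_rpow_div_log hc₁ e) (tendsto_log_const_mul_rpow_div_log hc₂ e) ?_ ?_
  · filter_upwards [eventually_gt_atTop 1, hf] with S hS hfS
    gcongr
    · exact (log_pos hS).le
    · exact hfS.1
  · filter_upwards [eventually_gt_atTop 1, hf] with S hS hfS
    gcongr
    · exact (log_pos hS).le
    · exact lt_of_lt_of_le (by positivity) hfS.1
    · exact hfS.2

lemma tendsto_log_one_add_div_log : Tendsto (fun S => log (1 + S) / log S) atTop (𝓝 1) := by
  refine tendsto_log_div_log_of_bounds one_pos two_pos ?_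
  filter_upwards [eventually_ge_atTop 1] with S hS
  rw [rpow_one]
  constructor <;> linarith

lemma tendsto_log_div_log_one_add_of_bounds {f : ℝ → ℝ} {e c₁ c₂ : ℝ} (hc₁ : 0 < c₁) (hc₂ : 0 < c₂)
    (hf : ∀ᶠ S in atTop, c₁ * S ^ e ≤ f S ∧ f S ≤ c₂ * S ^ e) :
    Tendsto (fun S => log (f S) / log (1 + S)) atTop (𝓝 e) := by
  have h := (tendsto_log_div_log_of_bounds hc₁ hc₂ hf).div tendsto_log_one_add_div_log one_ne_zero
  rw [div_one] at h
  refine h.congr' ?_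
  filter_upwards [eventually_gt_atTop 1] with S hS
  exact div_div_div_cancel_right₀ (log_pos hS).ne' _ _

lemma one_add_sqrt_add_sqrt_rpow_sq_bounds {S α : ℝ} (hS : 1 ≤ S) (hα : α ≤ 1) :
    S ≤ 1 + (√S + √(S ^ α)) ^ 2 ∧ 1 + (√S + √(S ^ α)) ^ 2 ≤ 5 * S := by
  have hsqrt : √(S ^ α) ≤ √S := sqrt_le_sqrt (by simpa using rpow_le_rpow_of_exponent_le hS hα)
  have hS' : √S ^ 2 = S := sq_sqrt (by linarith)
  constructor <;> nlinarith [sqrt_nonneg S, sqrt_nonneg (S ^ α)]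

lemma one_add_rpow_add_rpow_bounds {S a b : ℝ} (hS : 1 ≤ S) (hab : 0 ≤ max a b) :
    S ^ max a b ≤ 1 + S ^ a + S ^ b ∧ 1 + S ^ a + S ^ b ≤ 3 * S ^ max a b := by
  have h1 := one_le_rpow hS hab
  have ha := rpow_le_rpow_of_exponent_le hS (le_max_left a b)
  have hb := rpow_le_rpow_of_exponent_le hS (le_max_right a b)
  have := rpow_nonneg (zero_le_one.trans hS) a
  have := rpow_nonneg (zero_le_one.trans hS) b
  refine ⟨?_, by linarith⟩
  rcases max_choice a b with h | h <;> rw [h] <;> linarith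

lemma one_add_div_one_add_rpow_add_rpow_bounds {S a b : ℝ} (hS : 1 ≤ S) (hab₀ : 0 ≤ max a b)
    (hab₁ : max a b ≤ 1) :
    1 / 3 * S ^ (1 - max a b) ≤ 1 + S / (1 + S ^ a + S ^ b) ∧
      1 + S / (1 + S ^ a + S ^ b) ≤ 2 * S ^ (1 - max a b) := by
  obtain ⟨hlow, hupp⟩ := one_add_rpow_add_rpow_bounds hS hab₀
  have hS₀ : 0 < S := by linarith
  have hpow : S ^ (1 - max a b) = S / S ^ max a b := by rw [rpow_sub hS₀, rpow_one]
  have hone : 1 ≤ S ^ (1 - max a b) := one_le_rpow hS (by linarith)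
  constructor
  · rw [hpow]
    calc 1 / 3 * (S / S ^ max a b) = S / (3 * S ^ max a b) := by field_simp
      _ ≤ S / (1 + S ^ a + S ^ b) := by gcongr
      _ ≤ 1 + S / (1 + S ^ a + S ^ b) := by linarith
  · have : S / (1 + S ^ a + S ^ b) ≤ S / S ^ max a b := by gcongr
    rw [← hpow] at this
    linarith

/-- gDoF prelog of the Gaussian `2R₁ + R₂` outer bound in the symmetric setting
`SNR = S`, `INR = S^α`, `C = S^β`:
`lim_{S→∞} [log(1+(√S+√(S^α))²) + log(1+S^β) + log 2 + log(1+S/(1+S^α+S^β))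
  + log(1+S^α/S^β+S/S^α)] / log(1+S) = 1 + [1 − max{α,β}]⁺ + max{α, 1−α+β}`. -/
theorem gdof_two_r1_r2 (α β : ℝ) (hα0 : 0 ≤ α) (hα1 : α ≤ 1) (hβ0 : 0 ≤ β) (hβ1 : β ≤ 1) :
    Tendsto (fun S : ℝ =>
        (Real.logb 2 (1 + (Real.sqrt S + Real.sqrt (S ^ α)) ^ 2)
          + Real.logb 2 (1 + S ^ β) + Real.logb 2 2
          + Real.logb 2 (1 + S / (1 + S ^ α + S ^ β))
          + Real.logb 2 (1 + S ^ α / S ^ β + S / S ^ α))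
          / Real.logb 2 (1 + S))
      atTop (nhds (1 + max 0 (1 - max α β) + max α (1 - α + β))) := by
  have h₁ : Tendsto (fun S => log (1 + (√S + √(S ^ α)) ^ 2) / log (1 + S)) atTop (𝓝 1) := by
    refine tendsto_log_div_log_one_add_of_bounds one_pos (by norm_num : (0 : ℝ) < 5) ?_
    filter_upwards [eventually_ge_atTop 1] with S hS
    simpa only [rpow_one, one_mul] using one_add_sqrt_add_sqrt_rpow_sq_bounds hS hα1
  have h₂ : Tendsto (fun S => log (1 + S ^ β) / log (1 + S)) atTop (𝓝 β) := by
    refine tendsto_log_div_log_one_add_of_bounds one_pos two_pos ?_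
    filter_upwards [eventually_ge_atTop 1] with S hS
    have := one_le_rpow hS hβ0
    constructor <;> linarith
  have h₃ : Tendsto (fun S => log 2 / log (1 + S)) atTop (𝓝 0) :=
    tendsto_const_nhds.div_atTop <|
      tendsto_log_atTop.comp (tendsto_atTop_add_const_left _ 1 tendsto_id)
  have h₄ : Tendsto (fun S => log (1 + S / (1 + S ^ α + S ^ β)) / log (1 + S)) atTop
      (𝓝 (1 - max α β)) := by
    refine tendsto_log_div_log_one_add_of_bounds (by norm_num : (0 : ℝ) < 1 / 3) two_pos ?_
    filter_upwards [eventually_ge_atTop 1] with S hS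
    exact one_add_div_one_add_rpow_add_rpow_bounds hS (le_max_of_le_left hα0) (max_le hα1 hβ1)
  have h₅ : Tendsto (fun S => log (1 + S ^ α / S ^ β + S / S ^ α) / log (1 + S)) atTop
      (𝓝 (max (α - β) (1 - α))) := by
    refine tendsto_log_div_log_one_add_of_bounds one_pos three_pos ?_
    filter_upwards [eventually_ge_atTop 1] with S hS
    have hS₀ : 0 < S := by linarith
    have hpow : S / S ^ α = S ^ (1 - α) := by rw [rpow_sub hS₀, rpow_one]
    rw [← rpow_sub hS₀, hpow, one_mul]
    exact one_add_rpow_add_rpow_bounds hS (le_max_of_le_right (by linarith))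
  convert (((h₁.add h₂).add h₃).add h₄).add h₅ using 2 with S
  · simp only [logb, div_div_div_cancel_right₀ (log_pos one_lt_two).ne', add_div]
  · have hmax : max α (1 - α + β) = β + max (α - β) (1 - α) := by
      rw [← max_add_add_left]; congr 1 <;> ring
    rw [max_eq_right (by linarith [max_le hα1 hβ1]), hmax]
    ring
end

section
/- For 0 ≤ α < 1 and 0 ≤ β ≤ [2α − 1]⁺ (in particular β ≤ 2α − 1 when α ≥ 1/2, and β = 0 when α < 1/2), the polytope in (d₁, d₂) ∈ ℝ²≥0 defined by d₁ ≤ 1, d₂ ≤ 1, d₁+d₂ ≤ 2−α, d₁+d₂ ≤ max{α,1−α} + max{α, 1+β−α}, 2d₁+d₂ ≤ 1 + [1−max{α,β}]⁺ + max{α, 1−α+β}, d₁+2d₂ ≤ 2−α+max{α,β,1−α} equals the polytope defined by d₁ ≤ 1, d₂ ≤ 1, d₁+d₂ ≤ 2−α, d₁+d₂ ≤ 2·max{α,1−α}, 2d₁+d₂ ≤ 2−α+max{α,1−α}, d₁+2d₂ ≤ 2−α+max{α,1−α} (the gDoF region of the classical non-cooperative interference channel). -/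
open Real

/-! Weak cooperation `β ≤ [2α−1]⁺` forces `β ≤ α` and `1 − α + β ≤ max α (1 − α)`: either
`β = 0`, or `α ≥ 1/2` and `1 − α + β ≤ α`. With these two facts each cooperative bound collapses
to the corresponding non-cooperative one, so the two polytopes are cut out by the same
inequalities. -/

section WeakCooperation

variable {α β : ℝ}

lemma le_of_le_max_zero_two_mul_sub_one (hα0 : 0 ≤ α) (hα1 : α ≤ 1)
    (hβ : β ≤ max 0 (2 * α - 1)) : β ≤ α := by
  rcases le_max_iff.mp hβ with hβ | hβ <;> linarith

lemma one_sub_add_le_max_of_le_max_zero_two_mul_sub_one (hβ : β ≤ max 0 (2 * α - 1)) :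
    1 - α + β ≤ max α (1 - α) := by
  rcases le_max_iff.mp hβ with hβ | hβ
  · exact le_max_of_le_right (by linarith)
  · exact le_max_of_le_left (by linarith)

lemma max_one_sub_add_eq_max_one_sub (hβ0 : 0 ≤ β) (hβ : β ≤ max 0 (2 * α - 1)) :
    max α (1 - α + β) = max α (1 - α) :=
  le_antisymm (max_le (le_max_left _ _) (one_sub_add_le_max_of_le_max_zero_two_mul_sub_one hβ))
    (max_le_max le_rfl (by linarith))

lemma max_add_max_one_add_sub_eq_two_mul (hβ0 : 0 ≤ β) (hβ : β ≤ max 0 (2 * α - 1)) :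
    max α (1 - α) + max α (1 + β - α) = 2 * max α (1 - α) := by
  rw [show 1 + β - α = 1 - α + β by ring, max_one_sub_add_eq_max_one_sub hβ0 hβ, two_mul]

lemma one_add_max_zero_one_sub_max_add_max_eq (hα0 : 0 ≤ α) (hα1 : α ≤ 1) (hβ0 : 0 ≤ β)
    (hβ : β ≤ max 0 (2 * α - 1)) :
    1 + max 0 (1 - max α β) + max α (1 - α + β) = 2 - α + max α (1 - α) := by
  have hβα := le_of_le_max_zero_two_mul_sub_one hα0 hα1 hβ
  rw [max_eq_left hβα, max_eq_right (by linarith), max_one_sub_add_eq_max_one_sub hβ0 hβ]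
  ring

lemma max_max_one_sub_eq_max_one_sub (hα0 : 0 ≤ α) (hα1 : α ≤ 1)
    (hβ : β ≤ max 0 (2 * α - 1)) : max α (max β (1 - α)) = max α (1 - α) := by
  rw [← max_assoc, max_eq_left (le_of_le_max_zero_two_mul_sub_one hα0 hα1 hβ)]

end WeakCooperation

/-- For weak cooperation `β ≤ [2α−1]⁺` (and `0 ≤ α < 1`, `0 ≤ β`), the cooperative gDoF
outer-bound polytope coincides with the gDoF region of the classical non-cooperative IC. -/
theorem gdof_region_eq_noncooperative (α β : ℝ)
    (hα0 : 0 ≤ α) (hα1 : α < 1) (hβ0 : 0 ≤ β) (hβ : β ≤ max 0 (2 * α - 1)) :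
    {d : ℝ × ℝ | 0 ≤ d.1 ∧ 0 ≤ d.2 ∧
      d.1 ≤ 1 ∧ d.2 ≤ 1 ∧
      d.1 + d.2 ≤ 2 - α ∧
      d.1 + d.2 ≤ max α (1 - α) + max α (1 + β - α) ∧
      2 * d.1 + d.2 ≤ 1 + max 0 (1 - max α β) + max α (1 - α + β) ∧
      d.1 + 2 * d.2 ≤ 2 - α + max α (max β (1 - α))}
    = {d : ℝ × ℝ | 0 ≤ d.1 ∧ 0 ≤ d.2 ∧
      d.1 ≤ 1 ∧ d.2 ≤ 1 ∧
      d.1 + d.2 ≤ 2 - α ∧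
      d.1 + d.2 ≤ 2 * max α (1 - α) ∧
      2 * d.1 + d.2 ≤ 2 - α + max α (1 - α) ∧
      d.1 + 2 * d.2 ≤ 2 - α + max α (1 - α)} := by
  rw [max_add_max_one_add_sub_eq_two_mul hβ0 hβ,
    one_add_max_zero_one_sub_max_add_max_eq hα0 hα1.le hβ0 hβ,
    max_max_one_sub_eq_max_one_sub hα0 hα1.le hβ]
end
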